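/- arXiv:1310.1578 — 2 statements merged into one kernel-verified Lean document; each statement's English description precedes it below -/
import Mathlib

section
/- Let ξ ≥ 0 and η ≥ 0 be random variables on a probability space such that E[exp(2K η^{1/μ})] < ∞ and E[ξ^{2} · 1_{η ≤ N}] ≤ K' exp(K' N^{1/μ}) for all integers N ≥ 1, where K, K' > 0, μ ∈ (1/2,1], and 2K ≥ 2K'. Then E[ξ] < ∞. More precisely, (E[ξ])^2 ≤ E[exp(2K' η^{1/μ})] · Σ_{n=1}^∞ exp(−2K'(n−1)^{1/μ}) · K' exp(K' n^{1/μ}) < ∞. -/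
open Real MeasureTheory ENNReal

/-! Cauchy–Schwarz with the weight `exp (K' η ^ p)`, `p = 1 / μ`, gives
`(E ξ)² ≤ E[ξ² exp (-2K' η ^ p)] · E[exp (2K' η ^ p)]`; the second factor is finite since `K' ≤ K`.
On the layer `{⌊η⌋ = n}` the weight is at most `exp (-2K' n ^ p)` and `η ≤ n + 1`, so the moment
bound turns the first factor into the series. Because `p ≤ 2`, `(n + 1) ^ p ≤ (16/9) n ^ p` for
`n ≥ 3`, so its terms decay like `exp (-(2/9) K' n ^ p)`. -/

lemma summable_exp_neg_two_mul_rpow_add_rpow_succ {a p : ℝ} (ha : 0 < a) (hp1 : 1 ≤ p)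
    (hp2 : p ≤ 2) :
    Summable fun n : ℕ => exp (-(2 * a) * (n : ℝ) ^ p + a * ((n : ℝ) + 1) ^ p) := by
  have hgeom : Summable fun n : ℕ => exp (-(2 / 9 * a) * (n : ℝ) ^ p) :=
    summable_exp_nat_mul_of_ge (by linarith) fun n => by
      rcases Nat.eq_zero_or_pos n with rfl | hn
      · simpa using rpow_nonneg le_rfl p
      · exact self_le_rpow_of_one_le (by exact_mod_cast hn) hp1
  refine hgeom.of_norm_bounded_eventually_nat (Filter.eventually_atTop.2 ⟨3, fun n hn => ?_⟩)
  rw [norm_of_nonneg (exp_nonneg _)]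
  gcongr exp ?_
  have hn3 : (3 : ℝ) ≤ n := by exact_mod_cast hn
  have hsucc : ((n : ℝ) + 1) ^ p ≤ 16 / 9 * (n : ℝ) ^ p :=
    calc ((n : ℝ) + 1) ^ p ≤ (4 / 3 * (n : ℝ)) ^ p := by gcongr; linarith
      _ = (4 / 3 : ℝ) ^ p * (n : ℝ) ^ p := mul_rpow (by norm_num) (by positivity)
      _ ≤ (4 / 3 : ℝ) ^ (2 : ℝ) * (n : ℝ) ^ p := by
        gcongr; norm_num
      _ = 16 / 9 * (n : ℝ) ^ p := by norm_num
  nlinarith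

lemma sq_lintegral_le_lintegral_sq_mul_lintegral_sq {α : Type*} [MeasurableSpace α]
    {μ : Measure α} {f g : α → ℝ≥0∞} (hf : AEMeasurable f μ) (hg : AEMeasurable g μ) :
    (∫⁻ x, f x * g x ∂μ) ^ 2 ≤ (∫⁻ x, f x ^ 2 ∂μ) * ∫⁻ x, g x ^ 2 ∂μ := by
  have h := ENNReal.lintegral_mul_le_Lp_mul_Lq μ Real.HolderConjugate.two_two hf hg
  simp only [Pi.mul_apply, ENNReal.rpow_two] at h
  calc (∫⁻ x, f x * g x ∂μ) ^ 2
      ≤ ((∫⁻ x, f x ^ 2 ∂μ) ^ (1 / 2 : ℝ) * (∫⁻ x, g x ^ 2 ∂μ) ^ (1 / 2 : ℝ)) ^ 2 := by gcongr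
    _ = (∫⁻ x, f x ^ 2 ∂μ) * ∫⁻ x, g x ^ 2 ∂μ := by
      rw [mul_pow, ← ENNReal.rpow_natCast, ← ENNReal.rpow_natCast, ← ENNReal.rpow_mul,
        ← ENNReal.rpow_mul]
      norm_num

lemma sq_lintegral_le_lintegral_exp_mul_sq_mul_lintegral_exp {α : Type*} [MeasurableSpace α]
    {μ : Measure α} {f : α → ℝ≥0∞} {φ : α → ℝ} (hf : AEMeasurable f μ)
    (hφ : AEMeasurable φ μ) :
    (∫⁻ x, f x ∂μ) ^ 2 ≤
      (∫⁻ x, ENNReal.ofReal (exp (-(2 * φ x))) * f x ^ 2 ∂μ) *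
        ∫⁻ x, ENNReal.ofReal (exp (2 * φ x)) ∂μ := by
  have hexp_sq (c : ℝ) (x : α) :
      ENNReal.ofReal (exp (c * φ x)) ^ 2 = ENNReal.ofReal (exp (2 * c * φ x)) := by
    rw [← ENNReal.ofReal_pow (exp_nonneg _), ← exp_nat_mul]; ring_nf
  have h := sq_lintegral_le_lintegral_sq_mul_lintegral_sq
    (f := fun x => ENNReal.ofReal (exp (-1 * φ x)) * f x)
    (g := fun x => ENNReal.ofReal (exp (1 * φ x)))
    ((hφ.const_mul _).exp.ennreal_ofReal.mul hf) (hφ.const_mul _).exp.ennreal_ofReal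
  simp only [mul_pow, hexp_sq, mul_right_comm _ (f _), ← ENNReal.ofReal_mul (exp_nonneg _),
    ← exp_add] at h
  simpa using h

lemma lintegral_antitone_comp_mul_le_tsum {α : Type*} [MeasurableSpace α] {μ : Measure α}
    {η : α → ℝ} (hη : Measurable η) (hη0 : ∀ x, 0 ≤ η x) {w : ℝ → ℝ≥0∞}
    (hw : AntitoneOn w (Set.Ici 0)) {g : α → ℝ≥0∞} (hg : Measurable g) :
    ∫⁻ x, w (η x) * g x ∂μ ≤ ∑' n : ℕ, w n * ∫⁻ x in {x | η x ≤ n + 1}, g x ∂μ := by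
  have hfloor : Measurable fun x => ⌊η x⌋₊ := Nat.measurable_floor.comp hη
  calc ∫⁻ x, w (η x) * g x ∂μ
      = ∑' n : ℕ, ∫⁻ x in (fun x => ⌊η x⌋₊) ⁻¹' {n}, w (η x) * g x ∂μ := by
        rw [← lintegral_iUnion (fun n => hfloor (measurableSet_singleton n))
          (fun m n hmn => Set.disjoint_singleton.2 hmn |>.preimage _),
          ← Set.preimage_iUnion, Set.iUnion_of_singleton, Set.preimage_univ, setLIntegral_univ]
    _ ≤ ∑' n : ℕ, ∫⁻ x in (fun x => ⌊η x⌋₊) ⁻¹' {n}, w n * g x ∂μ := by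
        refine ENNReal.tsum_le_tsum fun n => setLIntegral_mono (hg.const_mul _) fun x hx => ?_
        have hx : ⌊η x⌋₊ = n := hx
        gcongr
        exact hw (Set.mem_Ici.2 n.cast_nonneg) (Set.mem_Ici.2 (hη0 x))
          (hx ▸ Nat.floor_le (hη0 x))
    _ ≤ ∑' n : ℕ, w n * ∫⁻ x in {x | η x ≤ n + 1}, g x ∂μ := by
        gcongr with n
        rw [lintegral_const_mul _ hg]
        gcongr
        intro x hx
        have hx : ⌊η x⌋₊ = n := hx
        exact (hx ▸ Nat.lt_floor_add_one (η x)).le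

theorem stmt_4_general {Ω : Type*} [MeasureSpace Ω]
    (ξ η : Ω → ℝ) (hξm : Measurable ξ) (hηm : Measurable η)
    (hξ0 : ∀ ω, 0 ≤ ξ ω) (hη0 : ∀ ω, 0 ≤ η ω)
    (K K' μ : ℝ) (hK' : 0 < K') (hKK' : K' ≤ K)
    (hμ : 1 / 2 < μ) (hμ1 : μ ≤ 1)
    (hexp : ∫⁻ ω, ENNReal.ofReal (Real.exp (2 * K * η ω ^ (1 / μ))) < ⊤)
    (hmom : ∀ N : ℕ, 1 ≤ N →
      ∫⁻ ω in {ω | η ω ≤ (N : ℝ)}, ENNReal.ofReal ((ξ ω) ^ 2)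
        ≤ ENNReal.ofReal (K' * Real.exp (K' * (N : ℝ) ^ (1 / μ)))) :
    (∫⁻ ω, ENNReal.ofReal (ξ ω)) < ⊤ ∧
    (∫⁻ ω, ENNReal.ofReal (ξ ω)) ^ 2 ≤
      (∫⁻ ω, ENNReal.ofReal (Real.exp (2 * K' * η ω ^ (1 / μ)))) *
        ∑' n : ℕ, ENNReal.ofReal
          (Real.exp (-(2 * K') * (n : ℝ) ^ (1 / μ)) *
            (K' * Real.exp (K' * ((n : ℝ) + 1) ^ (1 / μ)))) ∧
    (∑' n : ℕ, ENNReal.ofReal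
      (Real.exp (-(2 * K') * (n : ℝ) ^ (1 / μ)) *
        (K' * Real.exp (K' * ((n : ℝ) + 1) ^ (1 / μ))))) < ⊤ := by
  have hμ0 : 0 < μ := by linarith
  have hp1 : 1 ≤ 1 / μ := by rw [le_div_iff₀ hμ0]; linarith
  have hp2 : 1 / μ ≤ 2 := by rw [div_le_iff₀ hμ0]; linarith
  set p := 1 / μ
  set S : ℝ≥0∞ := ∑' n : ℕ, ENNReal.ofReal
    (exp (-(2 * K') * (n : ℝ) ^ p) * (K' * exp (K' * ((n : ℝ) + 1) ^ p)))
  set E : ℝ≥0∞ := ∫⁻ ω, ENNReal.ofReal (exp (2 * K' * η ω ^ p))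
  have hS : S < ⊤ :=
    Summable.tsum_ofReal_lt_top
      (((summable_exp_neg_two_mul_rpow_add_rpow_succ hK' hp1 hp2).mul_left K').congr fun n => by
        rw [exp_add]; ring)
  have hE : E < ⊤ := by
    refine (lintegral_mono fun ω => ?_).trans_lt hexp
    have hηp := rpow_nonneg (hη0 ω) p
    gcongr
  have hweight : AntitoneOn (fun t : ℝ => ENNReal.ofReal (exp (-(2 * K') * t ^ p))) (Set.Ici 0) :=
    fun s hs t _ hst => ENNReal.ofReal_le_ofReal <| exp_le_exp.2 <|
      mul_le_mul_of_nonpos_left (rpow_le_rpow hs hst (by linarith)) (by linarith)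
  have hweighted : ∫⁻ ω, ENNReal.ofReal (exp (-(2 * K' * η ω ^ p))) * ENNReal.ofReal (ξ ω) ^ 2
      ≤ S := by
    calc _ = ∫⁻ ω, ENNReal.ofReal (exp (-(2 * K') * η ω ^ p)) * ENNReal.ofReal (ξ ω ^ 2) := by
          refine lintegral_congr fun ω => ?_
          rw [ENNReal.ofReal_pow (hξ0 ω), neg_mul]
      _ ≤ _ := lintegral_antitone_comp_mul_le_tsum hηm hη0 hweight (hξm.pow_const 2).ennreal_ofReal
      _ ≤ _ := by
          refine ENNReal.tsum_le_tsum fun n => ?_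
          rw [ENNReal.ofReal_mul (exp_nonneg _)]
          gcongr
          exact_mod_cast hmom (n + 1) n.succ_pos
  have hmain : (∫⁻ ω, ENNReal.ofReal (ξ ω)) ^ 2 ≤ E * S := by
    have hCS := sq_lintegral_le_lintegral_exp_mul_sq_mul_lintegral_exp (μ := volume)
      (φ := fun ω => K' * η ω ^ p)
      hξm.ennreal_ofReal.aemeasurable ((hηm.pow_const p).const_mul K').aemeasurable
    simp only [← mul_assoc] at hCS
    exact hCS.trans ((mul_le_mul_left hweighted E).trans_eq (mul_comm S E))
  exact ⟨by simpa using hmain.trans_lt (mul_lt_top hE hS), hmain, hS⟩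

theorem stmt_4 {Ω : Type*} [MeasureSpace Ω] [IsProbabilityMeasure (volume : Measure Ω)]
    (ξ η : Ω → ℝ) (hξm : Measurable ξ) (hηm : Measurable η)
    (hξ0 : ∀ ω, 0 ≤ ξ ω) (hη0 : ∀ ω, 0 ≤ η ω)
    (K K' μ : ℝ) (hK : 0 < K) (hK' : 0 < K') (hKK' : K' ≤ K)
    (hμ : 1 / 2 < μ) (hμ1 : μ ≤ 1)
    (hexp : ∫⁻ ω, ENNReal.ofReal (Real.exp (2 * K * η ω ^ (1 / μ))) < ⊤)
    (hmom : ∀ N : ℕ, 1 ≤ N →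
      ∫⁻ ω in {ω | η ω ≤ (N : ℝ)}, ENNReal.ofReal ((ξ ω) ^ 2)
        ≤ ENNReal.ofReal (K' * Real.exp (K' * (N : ℝ) ^ (1 / μ)))) :
    (∫⁻ ω, ENNReal.ofReal (ξ ω)) < ⊤ ∧
    (∫⁻ ω, ENNReal.ofReal (ξ ω)) ^ 2 ≤
      (∫⁻ ω, ENNReal.ofReal (Real.exp (2 * K' * η ω ^ (1 / μ)))) *
        ∑' n : ℕ, ENNReal.ofReal
          (Real.exp (-(2 * K') * (n : ℝ) ^ (1 / μ)) *
            (K' * Real.exp (K' * ((n : ℝ) + 1) ^ (1 / μ)))) ∧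
    (∑' n : ℕ, ENNReal.ofReal
      (Real.exp (-(2 * K') * (n : ℝ) ^ (1 / μ)) *
        (K' * Real.exp (K' * ((n : ℝ) + 1) ^ (1 / μ))))) < ⊤ :=
  stmt_4_general ξ η hξm hηm hξ0 hη0 K K' μ hK' hKK' hμ hμ1 hexp hmom
end

section
/- Let g be α-Hölder and h be β-Hölder on [a,b] with α + β > 1. Then for all a ≤ u < v ≤ b, the Young integral satisfies |∫_u^v g ds dh| ≤ C_{α,β} ‖h‖_{a,b,β} (‖g‖_{u,v,∞} + ‖g‖_{u,v,α}(v−u)^α)(v−u)^β, where C_{α,β} depends only on α and β. In particular, if additionally ‖g‖_{u,v,∞} ≤ C(1+M) and ‖g‖_{u,v,α} ≤ C((v−u)^{β₀−α}(1+M) + Hα) for constants C, M, Hα ≥ 0 and β₀ ≥ α, then |∫_u^v g dh| ≤ C' ‖h‖_{a,b,β} (1 + M + Hα (v−u)^α)(v−u)^β. -/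
open Real

noncomputable def holderSemi (f : ℝ → ℝ) (a b γ : ℝ) : ℝ :=
  sSup {r : ℝ | ∃ s t : ℝ, a ≤ s ∧ s < t ∧ t ≤ b ∧ r = |f t - f s| / (t - s) ^ γ}

noncomputable def supNorm (f : ℝ → ℝ) (a b : ℝ) : ℝ :=
  sSup {r : ℝ | ∃ x : ℝ, a ≤ x ∧ x ≤ b ∧ r = |f x|}

/-- `I` is the (Young / Riemann–Stieltjes) integral `∫_u^v g dh`, defined as a limit
of Riemann–Stieltjes sums as the mesh of the partition tends to 0. -/
def IsRSIntegral (g h : ℝ → ℝ) (u v I : ℝ) : Prop :=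
  ∀ ε : ℝ, 0 < ε → ∃ δ : ℝ, 0 < δ ∧ ∀ (n : ℕ) (t : Fin (n + 1) → ℝ), Monotone t →
    t 0 = u → t (Fin.last n) = v →
    (∀ i : Fin n, t i.succ - t i.castSucc ≤ δ) →
    |(∑ i : Fin n, g (t i.castSucc) * (h (t i.succ) - h (t i.castSucc))) - I| < ε

/-! Along the dyadic partitions of `[u, v]` the Riemann–Stieltjes sums converge to `I`. Refining
level `N` to level `N + 1` changes the sum by `∑ (g mid - g left) * (h right - h mid)` over the
`2 ^ N` intervals, which is at most `G * H * (v - u) ^ (α + β) / 2 ^ (α + β) * r ^ N` with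
`r = 2 / 2 ^ (α + β) < 1` because `α + β > 1`. Summing the geometric series bounds
`|I - g u * (h v - h u)|` by `G * H * (v - u) ^ (α + β) / (2 ^ (α + β) - 2)`, and the coarsest sum
`g u * (h v - h u)` is at most `‖g‖_∞ * ‖h‖_β * (v - u) ^ β`. -/

open Filter Topology Finset

def IsHolderOn (f : ℝ → ℝ) (a b γ H : ℝ) : Prop :=
  ∀ s t : ℝ, a ≤ s → s ≤ t → t ≤ b → |f t - f s| ≤ H * (t - s) ^ γ

section HolderNorms

variable {f : ℝ → ℝ} {a b γ H : ℝ}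

lemma IsHolderOn.mono {u v : ℝ} (hf : IsHolderOn f a b γ H) (hau : a ≤ u) (hvb : v ≤ b) :
    IsHolderOn f u v γ H :=
  fun s t hs hst ht => hf s t (hau.trans hs) hst (ht.trans hvb)

lemma holderSemi_nonneg : 0 ≤ holderSemi f a b γ :=
  Real.sSup_nonneg <| by
    rintro _ ⟨s, t, -, hst, -, rfl⟩
    have : 0 < t - s := sub_pos.2 hst
    positivity

lemma IsHolderOn.holderSemi (hf : IsHolderOn f a b γ H) :
    IsHolderOn f a b γ (holderSemi f a b γ) := by
  have hbdd : BddAbove {r : ℝ | ∃ s t : ℝ, a ≤ s ∧ s < t ∧ t ≤ b ∧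
      r = |f t - f s| / (t - s) ^ γ} := by
    refine ⟨H, ?_⟩
    rintro _ ⟨s, t, hs, hst, ht, rfl⟩
    rw [div_le_iff₀ (by bound)]
    exact hf s t hs hst.le ht
  intro s t hs hst ht
  rcases hst.eq_or_lt with rfl | hst
  · simpa using mul_nonneg holderSemi_nonneg (Real.rpow_nonneg le_rfl γ)
  · rw [← div_le_iff₀ (by bound)]
    exact le_csSup hbdd ⟨s, t, hs, hst, ht, rfl⟩

lemma IsHolderOn.abs_le_supNorm (hf : IsHolderOn f a b γ H) (hγ : 0 ≤ γ) {x : ℝ}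
    (hax : a ≤ x) (hxb : x ≤ b) : |f x| ≤ supNorm f a b := by
  have hbdd : BddAbove {r : ℝ | ∃ x : ℝ, a ≤ x ∧ x ≤ b ∧ r = |f x|} := by
    refine ⟨|f a| + |H| * (b - a) ^ γ, ?_⟩
    rintro _ ⟨y, hay, hyb, rfl⟩
    have : |f y - f a| ≤ |H| * (b - a) ^ γ :=
      calc |f y - f a| ≤ H * (y - a) ^ γ := hf a y le_rfl hay hyb
        _ ≤ |H| * (b - a) ^ γ := by
          gcongr
          exact le_abs_self H
    linarith [abs_sub_abs_le_abs_sub (f y) (f a)]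
  exact le_csSup hbdd ⟨x, hax, hxb, rfl⟩

end HolderNorms

def stieltjesSum (g h : ℝ → ℝ) (p : ℕ → ℝ) (n : ℕ) : ℝ :=
  ∑ j ∈ range n, g (p j) * (h (p (j + 1)) - h (p j))

lemma stieltjesSum_two_mul_sub (g h : ℝ → ℝ) (p : ℕ → ℝ) (n : ℕ) :
    stieltjesSum g h p (2 * n) - stieltjesSum g h (fun j => p (2 * j)) n =
      ∑ j ∈ range n, (g (p (2 * j + 1)) - g (p (2 * j))) *
        (h (p (2 * j + 2)) - h (p (2 * j + 1))) := by
  induction n with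
  | zero => simp [stieltjesSum]
  | succ n ih =>
    simp only [stieltjesSum, Nat.mul_succ, sum_range_succ] at ih ⊢
    rw [← ih]
    ring

lemma stieltjesSum_eq_sum_fin (g h : ℝ → ℝ) (p : ℕ → ℝ) (n : ℕ) :
    stieltjesSum g h p n = ∑ i : Fin n, g (p i.castSucc) * (h (p i.succ) - h (p i.castSucc)) := by
  simp [stieltjesSum, Fin.sum_univ_eq_sum_range (fun j => g (p j) * (h (p (j + 1)) - h (p j)))]

noncomputable def dyadicPt (u v : ℝ) (N j : ℕ) : ℝ := u + j * ((v - u) / 2 ^ N)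

section Dyadic

variable {u v : ℝ}

@[simp] lemma dyadicPt_zero (N : ℕ) : dyadicPt u v N 0 = u := by simp [dyadicPt]

@[simp] lemma dyadicPt_two_pow (N : ℕ) : dyadicPt u v N (2 ^ N) = v := by
  simp only [dyadicPt]; push_cast; field_simp; ring

lemma dyadicPt_succ_two_mul (N j : ℕ) : dyadicPt u v (N + 1) (2 * j) = dyadicPt u v N j := by
  simp only [dyadicPt, pow_succ]; push_cast; field_simp

lemma dyadicPt_add_sub (N j k : ℕ) :
    dyadicPt u v N (j + k) - dyadicPt u v N j = k * ((v - u) / 2 ^ N) := by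
  simp only [dyadicPt]; push_cast; ring

lemma dyadicPt_mono (huv : u ≤ v) (N : ℕ) : Monotone (dyadicPt u v N) := by
  intro j k hjk
  simp only [dyadicPt]
  gcongr

lemma dyadicPt_mem_Icc (huv : u ≤ v) {N j : ℕ} (hj : j ≤ 2 ^ N) :
    dyadicPt u v N j ∈ Set.Icc u v := by
  simpa using And.intro (dyadicPt_mono huv N (Nat.zero_le j)) (dyadicPt_mono huv N hj)

end Dyadic

lemma IsRSIntegral.tendsto_dyadic {g h : ℝ → ℝ} {u v I : ℝ} (hI : IsRSIntegral g h u v I)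
    (huv : u ≤ v) :
    Tendsto (fun N => stieltjesSum g h (dyadicPt u v N) (2 ^ N)) atTop (𝓝 I) := by
  have hmesh : Tendsto (fun N : ℕ => (v - u) / 2 ^ N) atTop (𝓝 0) := by
    simpa [div_eq_mul_inv] using (tendsto_pow_atTop_nhds_zero_of_lt_one
      (by norm_num : (0 : ℝ) ≤ 2⁻¹) (by norm_num)).const_mul (v - u)
  rw [Metric.tendsto_nhds]
  intro ε hε
  obtain ⟨δ, hδ, hsum⟩ := hI ε hε
  filter_upwards [hmesh.eventually (ge_mem_nhds hδ)] with N hN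
  rw [Real.dist_eq, stieltjesSum_eq_sum_fin]
  refine hsum (2 ^ N) (fun i => dyadicPt u v N i) (fun i j hij => dyadicPt_mono huv N hij)
    (dyadicPt_zero N) (dyadicPt_two_pow N) fun i => ?_
  simpa [dyadicPt_add_sub] using hN

lemma two_pow_mul_div_two_pow_succ_rpow {x : ℝ} (hx : 0 ≤ x) (θ : ℝ) (N : ℕ) :
    2 ^ N * (x / 2 ^ (N + 1)) ^ θ = x ^ θ / 2 ^ θ * (2 / 2 ^ θ) ^ N := by
  rw [Real.div_rpow hx (by positivity), ← Real.rpow_pow_comm zero_le_two, div_pow, pow_succ]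
  field_simp

lemma abs_stieltjesSum_dyadic_succ_sub_le {g h : ℝ → ℝ} {u v α β G H : ℝ} (huv : u ≤ v)
    (hαβ : α + β ≠ 0) (hg : IsHolderOn g u v α G) (hh : IsHolderOn h u v β H) (N : ℕ) :
    |stieltjesSum g h (dyadicPt u v (N + 1)) (2 ^ (N + 1)) -
        stieltjesSum g h (dyadicPt u v N) (2 ^ N)| ≤
      G * H * ((v - u) ^ (α + β) / 2 ^ (α + β)) * (2 / 2 ^ (α + β)) ^ N := by
  set p := dyadicPt u v (N + 1)
  set c := (v - u) / 2 ^ (N + 1)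
  have hp : ∀ j, p (j + 1) - p j = c := fun j => by simpa using dyadicPt_add_sub (N + 1) j 1
  have hterm : ∀ j ∈ range (2 ^ N),
      |(g (p (2 * j + 1)) - g (p (2 * j))) * (h (p (2 * j + 2)) - h (p (2 * j + 1)))| ≤
        G * c ^ α * (H * c ^ β) := by
    intro j hj
    have hj : 2 * j + 2 ≤ 2 ^ (N + 1) := by rw [mem_range] at hj; rw [pow_succ]; omega
    have mem := fun k (hk : k ≤ 2 * j + 2) => dyadicPt_mem_Icc huv (hk.trans hj)
    have hg' := hg _ _ (mem (2 * j) (by omega)).1 (dyadicPt_mono huv _ (by omega))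
      (mem (2 * j + 1) (by omega)).2
    have hh' := hh _ _ (mem (2 * j + 1) (by omega)).1 (dyadicPt_mono huv _ (by omega))
      (mem (2 * j + 2) (by omega)).2
    rw [hp] at hg'
    rw [show 2 * j + 2 = 2 * j + 1 + 1 from rfl, hp] at hh'
    rw [abs_mul]
    exact mul_le_mul hg' hh' (abs_nonneg _) ((abs_nonneg _).trans hg')
  have hcoarse : dyadicPt u v N = fun j => p (2 * j) :=
    funext fun j => (dyadicPt_succ_two_mul N j).symm
  rw [hcoarse, pow_succ', stieltjesSum_two_mul_sub]
  calc _ ≤ ∑ j ∈ range (2 ^ N), G * c ^ α * (H * c ^ β) :=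
        (abs_sum_le_sum_abs _ _).trans (sum_le_sum hterm)
    _ = G * H * (2 ^ N * c ^ (α + β)) := by
      rw [sum_const, card_range, nsmul_eq_mul, Real.rpow_add' (by positivity) hαβ]
      push_cast
      ring
    _ = _ := by rw [two_pow_mul_div_two_pow_succ_rpow (sub_nonneg.2 huv)]; ring

lemma two_lt_two_rpow {θ : ℝ} (hθ : 1 < θ) : 2 < (2 : ℝ) ^ θ := by
  simpa using Real.rpow_lt_rpow_of_exponent_lt one_lt_two hθ

lemma IsRSIntegral.abs_sub_le {g h : ℝ → ℝ} {u v I α β G H : ℝ} (hI : IsRSIntegral g h u v I)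
    (huv : u ≤ v) (hαβ : 1 < α + β) (hg : IsHolderOn g u v α G) (hh : IsHolderOn h u v β H) :
    |I - g u * (h v - h u)| ≤ G * H * (v - u) ^ (α + β) / (2 ^ (α + β) - 2) := by
  have hratio : 2 / (2 : ℝ) ^ (α + β) < 1 :=
    (div_lt_one (by positivity)).2 (two_lt_two_rpow hαβ)
  have key := dist_le_of_le_geometric_of_tendsto₀ _ _ hratio
    (fun N => by
      rw [Real.dist_eq, abs_sub_comm]
      exact abs_stieltjesSum_dyadic_succ_sub_le huv (by linarith) hg hh N)
    (hI.tendsto_dyadic huv)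
  have hS0 : stieltjesSum g h (dyadicPt u v 0) (2 ^ 0) = g u * (h v - h u) := by
    simp [stieltjesSum, dyadicPt]
  rw [hS0, Real.dist_eq, abs_sub_comm] at key
  convert key using 1
  field_simp

lemma abs_le_young_love {g h : ℝ → ℝ} {a b u v I α β G H : ℝ} (hα : 0 ≤ α) (hαβ : 1 < α + β)
    (hau : a ≤ u) (huv : u < v) (hvb : v ≤ b) (hg : IsHolderOn g a b α G)
    (hh : IsHolderOn h a b β H) (hI : IsRSIntegral g h u v I) :
    |I| ≤ (1 + (2 ^ (α + β) - 2)⁻¹) * holderSemi h a b β *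
      (supNorm g u v + holderSemi g u v α * (v - u) ^ α) * (v - u) ^ β := by
  have hguv := hg.mono hau hvb
  have hhuv := hh.holderSemi.mono hau hvb
  have hK : 0 ≤ (2 ^ (α + β) - 2 : ℝ)⁻¹ := by have := two_lt_two_rpow hαβ; positivity
  have hgu : |g u| ≤ supNorm g u v := hguv.abs_le_supNorm hα le_rfl huv.le
  have hhvu : |h v - h u| ≤ holderSemi h a b β * (v - u) ^ β := hhuv u v le_rfl huv.le le_rfl
  have hyoung := hI.abs_sub_le huv.le hαβ hguv.holderSemi hhuv
  rw [Real.rpow_add (sub_pos.2 huv)] at hyoung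
  have hSg : 0 ≤ supNorm g u v := (abs_nonneg _).trans hgu
  have hHP : 0 ≤ holderSemi h a b β * (v - u) ^ β := mul_nonneg holderSemi_nonneg (by bound)
  have hHGQP : 0 ≤ holderSemi h a b β * holderSemi g u v α * (v - u) ^ α * (v - u) ^ β :=
    mul_nonneg (mul_nonneg (mul_nonneg holderSemi_nonneg holderSemi_nonneg) (by bound)) (by bound)
  calc |I| ≤ |g u| * |h v - h u| + |I - g u * (h v - h u)| := by
        rw [← abs_mul]; linarith [abs_sub_abs_le_abs_sub I (g u * (h v - h u))]
    _ ≤ supNorm g u v * (holderSemi h a b β * (v - u) ^ β) +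
          holderSemi g u v α * holderSemi h a b β * ((v - u) ^ α * (v - u) ^ β) *
            (2 ^ (α + β) - 2)⁻¹ := by
        gcongr
        simpa [div_eq_mul_inv] using hyoung
    _ ≤ _ := by linarith [mul_nonneg (mul_nonneg hK hSg) hHP, hHGQP]

lemma add_mul_rpow_le_of_le {S G M K C₀ x D α β₀ : ℝ} (hx : 0 < x) (hxD : x ≤ D) (hβ₀ : 0 ≤ β₀)
    (hM : 0 ≤ M) (hK : 0 ≤ K) (hC₀ : 0 ≤ C₀) (hS : S ≤ C₀ * (1 + M))
    (hG : G ≤ C₀ * (x ^ (β₀ - α) * (1 + M) + K)) :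
    S + G * x ^ α ≤ C₀ * (1 + D ^ β₀) * (1 + M + K * x ^ α) := by
  have hxα : x ^ (β₀ - α) * x ^ α = x ^ β₀ := by rw [← Real.rpow_add hx]; ring_nf
  calc S + G * x ^ α ≤ C₀ * (1 + M) + C₀ * (x ^ (β₀ - α) * (1 + M) + K) * x ^ α := by gcongr
    _ = C₀ * ((1 + x ^ β₀) * (1 + M) + K * x ^ α) := by rw [← hxα]; ring
    _ ≤ C₀ * ((1 + D ^ β₀) * (1 + M) + (1 + D ^ β₀) * (K * x ^ α)) := by
        have hxD' : 1 + x ^ β₀ ≤ 1 + D ^ β₀ := by gcongr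
        have hD : 1 ≤ 1 + D ^ β₀ := le_add_of_nonneg_right (Real.rpow_nonneg (by linarith) β₀)
        gcongr C₀ * (?_ * _ + ?_)
        exact le_mul_of_one_le_left (by positivity) hD
    _ = _ := by ring

theorem stmt_9_general (α β : ℝ) (hα : 0 < α) (hαβ : 1 < α + β) :
    -- the Young--Love inequality
    (∃ C : ℝ, 0 < C ∧ ∀ (g h : ℝ → ℝ) (a b u v I : ℝ),
      a ≤ u → u < v → v ≤ b →
      (∃ Hg : ℝ, ∀ s t : ℝ, a ≤ s → s ≤ t → t ≤ b → |g t - g s| ≤ Hg * (t - s) ^ α) →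
      (∃ Hh : ℝ, ∀ s t : ℝ, a ≤ s → s ≤ t → t ≤ b → |h t - h s| ≤ Hh * (t - s) ^ β) →
      IsRSIntegral g h u v I →
      |I| ≤ C * holderSemi h a b β *
        (supNorm g u v + holderSemi g u v α * (v - u) ^ α) * (v - u) ^ β) ∧
    -- the particular consequence
    (∀ β₀ C₀ D : ℝ, α ≤ β₀ → 0 < C₀ → 0 < D →
      ∃ C' : ℝ, 0 < C' ∧ ∀ (g h : ℝ → ℝ) (a b u v I M Hα : ℝ),
        a ≤ u → u < v → v ≤ b → b - a ≤ D → 0 ≤ M → 0 ≤ Hα →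
        (∃ Hg : ℝ, ∀ s t : ℝ, a ≤ s → s ≤ t → t ≤ b → |g t - g s| ≤ Hg * (t - s) ^ α) →
        (∃ Hh : ℝ, ∀ s t : ℝ, a ≤ s → s ≤ t → t ≤ b → |h t - h s| ≤ Hh * (t - s) ^ β) →
        supNorm g u v ≤ C₀ * (1 + M) →
        holderSemi g u v α ≤ C₀ * ((v - u) ^ (β₀ - α) * (1 + M) + Hα) →
        IsRSIntegral g h u v I →
        |I| ≤ C' * holderSemi h a b β * (1 + M + Hα * (v - u) ^ α) * (v - u) ^ β) := by
  set K := 1 + ((2 : ℝ) ^ (α + β) - 2)⁻¹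
  have hK : 0 < K := by have := two_lt_two_rpow hαβ; positivity
  refine ⟨⟨K, hK, fun g h a b u v I hau huv hvb ⟨_, hg⟩ ⟨_, hh⟩ hI =>
    abs_le_young_love hα.le hαβ hau huv hvb hg hh hI⟩, fun β₀ C₀ D hβ₀ hC₀ hD =>
    ⟨K * (C₀ * (1 + D ^ β₀)), by positivity, ?_⟩⟩
  intro g h a b u v I M Hα hau huv hvb hba hM hHα ⟨_, hg⟩ ⟨_, hh⟩ hsup hsemi hI
  have hKH : 0 ≤ K * holderSemi h a b β := mul_nonneg hK.le holderSemi_nonneg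
  calc |I| ≤ K * holderSemi h a b β *
        (supNorm g u v + holderSemi g u v α * (v - u) ^ α) * (v - u) ^ β :=
        abs_le_young_love hα.le hαβ hau huv hvb hg hh hI
    _ ≤ K * holderSemi h a b β * (C₀ * (1 + D ^ β₀) * (1 + M + Hα * (v - u) ^ α)) *
          (v - u) ^ β := by
        gcongr
        exact add_mul_rpow_le_of_le (sub_pos.2 huv) (by linarith) (by linarith) hM hHα hC₀.le
          hsup hsemi
    _ = _ := by ring

theorem stmt_9 (α β : ℝ) (hα : 0 < α) (hα1 : α ≤ 1) (hβ : 0 < β) (hβ1 : β ≤ 1)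
    (hαβ : 1 < α + β) :
    -- the Young--Love inequality
    (∃ C : ℝ, 0 < C ∧ ∀ (g h : ℝ → ℝ) (a b u v I : ℝ),
      a ≤ u → u < v → v ≤ b →
      (∃ Hg : ℝ, ∀ s t : ℝ, a ≤ s → s ≤ t → t ≤ b → |g t - g s| ≤ Hg * (t - s) ^ α) →
      (∃ Hh : ℝ, ∀ s t : ℝ, a ≤ s → s ≤ t → t ≤ b → |h t - h s| ≤ Hh * (t - s) ^ β) →
      IsRSIntegral g h u v I →
      |I| ≤ C * holderSemi h a b β *
        (supNorm g u v + holderSemi g u v α * (v - u) ^ α) * (v - u) ^ β) ∧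
    -- the particular consequence
    (∀ β₀ C₀ D : ℝ, α ≤ β₀ → 0 < C₀ → 0 < D →
      ∃ C' : ℝ, 0 < C' ∧ ∀ (g h : ℝ → ℝ) (a b u v I M Hα : ℝ),
        a ≤ u → u < v → v ≤ b → b - a ≤ D → 0 ≤ M → 0 ≤ Hα →
        (∃ Hg : ℝ, ∀ s t : ℝ, a ≤ s → s ≤ t → t ≤ b → |g t - g s| ≤ Hg * (t - s) ^ α) →
        (∃ Hh : ℝ, ∀ s t : ℝ, a ≤ s → s ≤ t → t ≤ b → |h t - h s| ≤ Hh * (t - s) ^ β) →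
        supNorm g u v ≤ C₀ * (1 + M) →
        holderSemi g u v α ≤ C₀ * ((v - u) ^ (β₀ - α) * (1 + M) + Hα) →
        IsRSIntegral g h u v I →
        |I| ≤ C' * holderSemi h a b β * (1 + M + Hα * (v - u) ^ α) * (v - u) ^ β) :=
  stmt_9_general α β hα hαβ
end
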